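/- For every function f : 𝔹^N → 𝔹^N, the single-index map G_f is continuous on the metric space (𝒳₁, d₁). -/
import Mathlib


open scoped BigOperators

/-- Hamming distance `d_e` on `𝔹^N`: the number of coordinates where `E` and `F` differ. -/
noncomputable def deH (N : ℕ) (E F : Fin N → Bool) : ℝ :=
  ((Finset.univ.filter fun i => E i ≠ F i).card : ℝ)

/-- The distance `d_s` on single-index strategies `⟦1,N⟧^ℕ`:
`d_s(S,Š) = (9/N) Σ_{k=1}^{∞} |S^k − Š^k| / 10^k` (sequences are indexed from 0 here,
so the `k`-th term of the sequence gets weight `10^{-(k+1)}`). -/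
noncomputable def ds1 (N : ℕ) (S T : ℕ → Fin N) : ℝ :=
  (9 / (N : ℝ)) * ∑' k : ℕ, |((S k : ℕ) : ℝ) - ((T k : ℕ) : ℝ)| / 10 ^ (k + 1)

/-- The distance `d₁` on the single-index phase space `𝒳₁ = ⟦1,N⟧^ℕ × 𝔹^N`. -/
noncomputable def dX1 (N : ℕ) (X Y : (ℕ → Fin N) × (Fin N → Bool)) : ℝ :=
  deH N X.2 Y.2 + ds1 N X.1 Y.1

/-- `F_f(k,E)_j = f(E)_j` if `j = k`, and `E_j` otherwise. -/
def Ff1 (N : ℕ) (f : (Fin N → Bool) → (Fin N → Bool)) (k : Fin N)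
    (E : Fin N → Bool) : Fin N → Bool :=
  fun j => if j = k then f E j else E j

/-- The single-index map `G_f(S,E) = (σ(S), F_f(S^0,E))`, where `σ` is the shift. -/
def Gf1 (N : ℕ) (f : (Fin N → Bool) → (Fin N → Bool)) :
    (ℕ → Fin N) × (Fin N → Bool) → (ℕ → Fin N) × (Fin N → Bool) :=
  fun X => (fun n => X.1 (n + 1), Ff1 N f (X.1 0) X.2)

lemma aux_summable (N : ℕ) (S T : ℕ → Fin N) :
    Summable (fun k : ℕ => |((S k : ℕ) : ℝ) - ((T k : ℕ) : ℝ)| / 10 ^ (k + 1)) := by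
  have hg : Summable (fun k : ℕ => ((N : ℝ) * (1/10)) * (1/10) ^ k) :=
    (summable_geometric_of_lt_one (by norm_num) (by norm_num)).mul_left _
  refine Summable.of_nonneg_of_le (fun k => by positivity) (fun k => ?_) hg
  have h1 : ((S k : ℕ) : ℝ) ≤ N := by
    exact_mod_cast le_of_lt (S k).isLt
  have h2 : ((T k : ℕ) : ℝ) ≤ N := by
    exact_mod_cast le_of_lt (T k).isLt
  have h3 : (0:ℝ) ≤ ((S k : ℕ) : ℝ) := by positivity
  have h4 : (0:ℝ) ≤ ((T k : ℕ) : ℝ) := by positivity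
  have habs : |((S k : ℕ) : ℝ) - ((T k : ℕ) : ℝ)| ≤ N := abs_le.mpr ⟨by linarith, by linarith⟩
  have hpow : ((N : ℝ) * (1/10)) * (1/10) ^ k = (N : ℝ) / 10 ^ (k+1) := by
    have h5 : ((N : ℝ) * (1/10)) * (1/10) ^ k = (N:ℝ) * (1/10) ^ (k+1) := by ring
    rw [h5, one_div_pow, mul_one_div]
  rw [hpow]
  have hp : (0:ℝ) ≤ 10 ^ (k+1) := by positivity
  exact div_le_div_of_nonneg_right habs hp

lemma aux_tsum_nonneg (N : ℕ) (S T : ℕ → Fin N) :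
    0 ≤ ∑' k : ℕ, |((S k : ℕ) : ℝ) - ((T k : ℕ) : ℝ)| / 10 ^ (k + 1) :=
  tsum_nonneg fun k => by positivity

lemma ds1_nonneg (N : ℕ) (S T : ℕ → Fin N) : 0 ≤ ds1 N S T :=
  mul_nonneg (by positivity) (aux_tsum_nonneg N S T)

lemma deH_nonneg (N : ℕ) (E F : Fin N → Bool) : 0 ≤ deH N E F := by
  unfold deH; positivity

/-- For every function `f : 𝔹^N → 𝔹^N`, the single-index map `G_f` is
continuous on the metric space `(𝒳₁, d₁)` (continuity stated in the usual `ε`-`δ` form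
for the metric `d₁`). -/
theorem Gf1_continuous (N : ℕ) (hN : 0 < N)
    (f : (Fin N → Bool) → (Fin N → Bool)) :
    ∀ X : (ℕ → Fin N) × (Fin N → Bool), ∀ ε : ℝ, 0 < ε →
      ∃ δ : ℝ, 0 < δ ∧ ∀ Y : (ℕ → Fin N) × (Fin N → Bool),
        dX1 N X Y < δ → dX1 N (Gf1 N f X) (Gf1 N f Y) < ε := by
  intro X ε hε
  have hNR : (0:ℝ) < N := by exact_mod_cast hN
  refine ⟨min (min (1:ℝ) (9 / (10 * (N:ℝ)))) (ε / 10), by positivity, ?_⟩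
  intro Y hY
  have hde_nn := deH_nonneg N X.2 Y.2
  have hds_nn := ds1_nonneg N X.1 Y.1
  have hde : deH N X.2 Y.2 < 1 := by
    have := lt_of_lt_of_le hY (le_trans (min_le_left _ _) (min_le_left _ _))
    unfold dX1 at this; linarith
  have hds : ds1 N X.1 Y.1 < min (min (1:ℝ) (9 / (10 * (N:ℝ)))) (ε / 10) := by
    unfold dX1 at hY; linarith
  -- environments equal
  have hE : X.2 = Y.2 := by
    have hcard : (Finset.univ.filter fun i => X.2 i ≠ Y.2 i).card = 0 := by
      by_contra h
      have : 1 ≤ ((Finset.univ.filter fun i => X.2 i ≠ Y.2 i).card : ℝ) := by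
        exact_mod_cast Nat.one_le_iff_ne_zero.mpr h
      unfold deH at hde; linarith
    funext i
    by_contra h
    have : i ∈ Finset.univ.filter fun i => X.2 i ≠ Y.2 i := by
      simp [h]
    rw [Finset.card_eq_zero.mp hcard] at this
    exact absurd this (Finset.notMem_empty i)
  -- first letters equal
  have hS0 : X.1 0 = Y.1 0 := by
    by_contra h
    have hne : ((X.1 0 : ℕ) : ℝ) ≠ ((Y.1 0 : ℕ) : ℝ) := by
      simp only [ne_eq, Nat.cast_inj]
      exact fun hh => h (Fin.val_injective hh)
    have hnat : (X.1 0 : ℕ) ≠ (Y.1 0 : ℕ) := fun hh => h (Fin.val_injective hh)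
    have h1 : (1:ℝ) ≤ |((X.1 0 : ℕ) : ℝ) - ((Y.1 0 : ℕ) : ℝ)| := by
      rcases hnat.lt_or_gt with hlt | hlt
      · have hc : ((X.1 0 : ℕ) : ℝ) + 1 ≤ ((Y.1 0 : ℕ) : ℝ) := by exact_mod_cast hlt
        have h2 : |((X.1 0:ℕ):ℝ) - ((Y.1 0:ℕ):ℝ)| = |((Y.1 0:ℕ):ℝ) - ((X.1 0:ℕ):ℝ)| :=
          abs_sub_comm _ _
        have h3 := le_abs_self (((Y.1 0:ℕ):ℝ) - ((X.1 0:ℕ):ℝ))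
        linarith
      · have hc : ((Y.1 0 : ℕ) : ℝ) + 1 ≤ ((X.1 0 : ℕ) : ℝ) := by exact_mod_cast hlt
        have h3 := le_abs_self (((X.1 0:ℕ):ℝ) - ((Y.1 0:ℕ):ℝ))
        linarith
    have hterm : (1:ℝ)/10 ≤ |((X.1 0 : ℕ) : ℝ) - ((Y.1 0 : ℕ) : ℝ)| / 10 ^ (0 + 1) := by
      simp only [pow_one, zero_add]
      linarith
    have hle := Summable.le_tsum (aux_summable N X.1 Y.1) 0 (fun i _ => by positivity)
    have hds2 : ds1 N X.1 Y.1 < 9 / (10 * N) :=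
      lt_of_lt_of_le hds (le_trans (min_le_left _ _) (min_le_right _ _))
    have : 9 / (10 * (N:ℝ)) ≤ ds1 N X.1 Y.1 := by
      unfold ds1
      have h9 : (0:ℝ) < 9 / N := by positivity
      calc 9 / (10 * (N:ℝ)) = (9 / N) * (1/10) := by field_simp
        _ ≤ (9 / N) * (|((X.1 0 : ℕ) : ℝ) - ((Y.1 0 : ℕ) : ℝ)| / 10 ^ (0 + 1)) := by
            apply mul_le_mul_of_nonneg_left hterm (le_of_lt h9)
        _ ≤ (9 / N) * ∑' k : ℕ, |((X.1 k : ℕ) : ℝ) - ((Y.1 k : ℕ) : ℝ)| / 10 ^ (k + 1) := by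
            exact mul_le_mul_of_nonneg_left hle (le_of_lt h9)
    linarith
  -- image second components equal
  have hF : Ff1 N f (X.1 0) X.2 = Ff1 N f (Y.1 0) Y.2 := by rw [hE, hS0]
  -- bound shifted distance
  set a : ℕ → ℝ := fun k => |((X.1 k : ℕ) : ℝ) - ((Y.1 k : ℕ) : ℝ)| / 10 ^ (k + 1) with ha
  have hsum := aux_summable N X.1 Y.1
  have hshift : ds1 N (fun n => X.1 (n + 1)) (fun n => Y.1 (n + 1)) ≤ 10 * ds1 N X.1 Y.1 := by
    have hterm : ∀ k : ℕ,
        |((X.1 (k+1) : ℕ) : ℝ) - ((Y.1 (k+1) : ℕ) : ℝ)| / 10 ^ (k + 1) = 10 * a (k + 1) := by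
      intro k
      simp only [ha]
      rw [pow_succ]
      field_simp
      ring
    have heq : (∑' k : ℕ, |((X.1 (k+1) : ℕ) : ℝ) - ((Y.1 (k+1) : ℕ) : ℝ)| / 10 ^ (k + 1))
        = 10 * ∑' k : ℕ, a (k + 1) := by
      rw [← tsum_mul_left]
      exact tsum_congr hterm
    have hzadd : ∑' k : ℕ, a k = a 0 + ∑' k : ℕ, a (k + 1) := Summable.tsum_eq_zero_add hsum
    have ha0 : 0 ≤ a 0 := by simp only [ha]; positivity
    unfold ds1
    rw [heq]
    have h9 : (0:ℝ) ≤ 9 / N := by positivity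
    have : ∑' k : ℕ, a (k + 1) ≤ ∑' k : ℕ, a k := by linarith
    calc 9 / (N:ℝ) * (10 * ∑' k : ℕ, a (k + 1)) = 10 * (9 / N * ∑' k : ℕ, a (k + 1)) := by ring
      _ ≤ 10 * (9 / N * ∑' k : ℕ, a k) := by
          apply mul_le_mul_of_nonneg_left (mul_le_mul_of_nonneg_left this h9) (by norm_num)
  -- conclude
  have hdsε : ds1 N X.1 Y.1 < ε / 10 := lt_of_lt_of_le hds (min_le_right _ _)
  have hdeG : deH N (Gf1 N f X).2 (Gf1 N f Y).2 = 0 := by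
    show deH N (Ff1 N f (X.1 0) X.2) (Ff1 N f (Y.1 0) Y.2) = 0
    rw [hF]
    unfold deH
    simp
  unfold dX1
  rw [hdeG]
  show (0:ℝ) + ds1 N (fun n => X.1 (n+1)) (fun n => Y.1 (n+1)) < ε
  linarith
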